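/- arXiv:1709.04895 — 2 statements merged into one kernel-verified Lean document; each statement's English description precedes it below -/
import Mathlib

section
/- Let G be a simple graph on n vertices with a designated Hamiltonian cycle C, and let uv and xy be two interlacing chords of G with u ≺ x ≺ v ≺ y. Then G contains a nontrivial cycle of length at least n − d_C(u,x) − d_C(v,y) + 2; in particular, G contains a nontrivial cycle missing at most d_C(u,x) + d_C(v,y) vertices. -/
/-!  We formalize "a graph `G` on `n` vertices with a designated Hamiltonian cycle `C`
(with a fixed cyclic orientation)" by taking the vertex set to be `ZMod n` (with `3 ≤ n`)
and the designated Hamiltonian cycle to be `0, 1, 2, ..., n-1, 0`, which is a Hamiltonian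
cycle of `G` thanks to the hypothesis `∀ i : ZMod n, G.Adj i (i + 1)`.  -/

/-- The length of the path from `x` to `y` along the designated Hamiltonian cycle,
following the fixed orientation; this is `d_C(x, y)`. -/
def dC {n : ℕ} (x y : ZMod n) : ℕ := (y - x).val

/-- `CBtw x y z` formalizes `x ≺ y ≺ z`: traversing the cycle starting from `x`
(in the fixed orientation), one meets `y` (strictly after `x`) and then `z`. -/
def CBtw {n : ℕ} (x y z : ZMod n) : Prop := 0 < dC x y ∧ dC x y < dC x z

/-- The set of vertices on the path from `a` to `b` along the cycle (following the
orientation), inclusive of both endpoints.  The two *domains* of a chord `{a, b}` are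
`arc a b` and `arc b a`. -/
def arc {n : ℕ} (a b : ZMod n) : Set (ZMod n) := {v | dC a v ≤ dC a b}

/-- The edge set of the designated Hamiltonian cycle. -/
def stdEdges (n : ℕ) : Set (Sym2 (ZMod n)) := {e | ∃ i : ZMod n, e = s(i, i + 1)}

/-- `{a, b}` is a chord of `G`: an edge of `G` not belonging to the designated
Hamiltonian cycle. -/
def IsChordPair {n : ℕ} (G : SimpleGraph (ZMod n)) (a b : ZMod n) : Prop :=
  G.Adj a b ∧ s(a, b) ∉ stdEdges n

/-- The chords `{a, b}` and `{x, y}` interlace: their endpoints are distinct and appear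
in alternating order around the cycle. -/
def Interlace {n : ℕ} (a b x y : ZMod n) : Prop :=
  (CBtw a x b ∧ CBtw b y a) ∨ (CBtw a y b ∧ CBtw b x a)

/-- `G` contains a cycle, distinct from the designated Hamiltonian cycle
(i.e. a *nontrivial* cycle), of length at least `L`. -/
def HasNontrivialCycleOfLength {n : ℕ} (G : SimpleGraph (ZMod n)) (L : ℝ) : Prop :=
  ∃ (w : ZMod n) (W : G.Walk w w), W.IsCycle ∧
    {e | e ∈ W.edges} ≠ stdEdges n ∧ L ≤ (W.length : ℝ)

/-! The cycle is `x → y` by the chord `xy`, forward along `C` from `y` to `u`, the chord `uv`,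
and backward along `C` from `v` to `x`. Its two arcs of `C` are disjoint because
`y ≺ u ≺ x ≺ v`, so it is a cycle; it misses exactly the interior vertices of the arcs from `u`
to `x` and from `v` to `y`; and it is nontrivial because it uses the chord `xy`. -/

namespace SimpleGraph.Walk

variable {V : Type*} {G : SimpleGraph V}

theorem IsPath.append_cons {a b c d : V} {p : G.Walk a b} {q : G.Walk c d} (hp : p.IsPath)
    (hq : q.IsPath) (h : G.Adj b c) (hpq : p.support.Disjoint q.support) :
    (p.append (cons h q)).IsPath := by
  rw [isPath_def, support_append, support_cons, List.tail_cons, List.nodup_append]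
  exact ⟨hp.support_nodup, hq.support_nodup, fun _ hx _ hy hxy => hpq hx (hxy ▸ hy)⟩

theorem IsPath.cons_isCycle_of_one_lt_length {u v : V} {p : G.Walk v u} (hp : p.IsPath)
    (hlen : 1 < p.length) (h : G.Adj u v) : (cons h p).IsCycle := by
  refine (cons_isCycle_iff p h).2 ⟨hp, ?_⟩
  cases p with
  | nil => simp at hlen
  | @cons _ w _ h' q =>
    rw [cons_isPath_iff] at hp
    rw [edges_cons, List.mem_cons, not_or]
    refine ⟨fun huv => ?_, fun hq => hp.2 (q.snd_mem_support_of_mem_edges hq)⟩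
    -- the edge `uv` can only be the first edge if `q` is a closed path, hence empty
    obtain rfl : u = w := by
      rcases Sym2.eq_iff.1 huv with ⟨rfl, -⟩ | ⟨rfl, -⟩
      · exact absurd h G.irrefl
      · rfl
    rw [length_cons, length_eq_zero_iff.2 (isPath_iff_nil.1 hp.1)] at hlen
    omega

end SimpleGraph.Walk

section CyclicDistance

variable {n : ℕ}

theorem dC_add_natCast {x : ZMod n} {j : ℕ} (hj : j < n) : dC x (x + j) = j := by
  rw [dC, add_sub_cancel_left, ZMod.val_natCast_of_lt hj]

theorem dC_add_dC {x y z : ZMod n} (h : dC x y + dC y z < n) : dC x y + dC y z = dC x z := by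
  rw [dC, dC, ← ZMod.val_add_of_lt h, sub_add_sub_cancel']
  rfl

theorem disjoint_arc {a b c d : ZMod n} (hb : dC a b < dC a c) (hd : dC a c + dC c d < n) :
    Disjoint (arc a b) (arc c d) := by
  refine Set.disjoint_left.2 fun w (hwb : dC a w ≤ dC a b) (hwd : dC c w ≤ dC c d) => ?_
  have : dC a c + dC c w = dC a w := dC_add_dC (by omega)
  omega

variable [NeZero n]

theorem add_dC (x y : ZMod n) : x + (dC x y : ZMod n) = y := by
  rw [dC, ZMod.natCast_zmod_val, add_sub_cancel]

theorem dC_lt (x y : ZMod n) : dC x y < n := ZMod.val_lt _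

theorem dC_add_dC_of_le {x y z : ZMod n} (h : dC x y ≤ dC x z) :
    dC x y + dC y z = dC x z := by
  have := ZMod.val_sub h
  rw [sub_sub_sub_cancel_right] at this
  simp only [dC] at *
  omega

theorem dC_add_dC_swap {x y : ZMod n} (h : x ≠ y) : dC x y + dC y x = n := by
  have : NeZero (y - x) := ⟨sub_ne_zero.2 h.symm⟩
  rw [dC, dC, ← neg_sub y x, ZMod.val_neg_of_ne_zero]
  have := ZMod.val_lt (y - x)
  omega

end CyclicDistance

section ArcWalk

variable {n : ℕ} {G : SimpleGraph (ZMod n)} (hC : ∀ i : ZMod n, G.Adj i (i + 1))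

def forwardWalk (a : ZMod n) : (k : ℕ) → G.Walk a (a + k)
  | 0 => SimpleGraph.Walk.nil.copy rfl (by simp)
  | k + 1 => ((forwardWalk a k).concat (hC (a + k))).copy rfl (by push_cast; ring)

theorem forwardWalk_length (a : ZMod n) (k : ℕ) : (forwardWalk hC a k).length = k := by
  induction k with
  | zero => simp [forwardWalk]
  | succ k ih => simp [forwardWalk, ih]

theorem forwardWalk_support (a : ZMod n) (k : ℕ) :
    (forwardWalk hC a k).support = (List.range (k + 1)).map (fun j : ℕ => a + j) := by
  induction k with
  | zero => simp [forwardWalk]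
  | succ k ih => simp [forwardWalk, ih, List.range_succ, add_assoc]

theorem forwardWalk_isPath (a : ZMod n) {k : ℕ} (hk : k < n) : (forwardWalk hC a k).IsPath := by
  rw [SimpleGraph.Walk.isPath_def, forwardWalk_support]
  refine List.nodup_range.map_on fun i hi j hj hij => ?_
  simp only [List.mem_range] at hi hj
  have := congrArg ZMod.val (add_left_cancel hij)
  rwa [ZMod.val_natCast_of_lt (by omega), ZMod.val_natCast_of_lt (by omega)] at this

variable [NeZero n]

def arcWalk (a b : ZMod n) : G.Walk a b := (forwardWalk hC a (dC a b)).copy rfl (add_dC a b)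

theorem arcWalk_length (a b : ZMod n) : (arcWalk hC a b).length = dC a b := by
  simp [arcWalk, forwardWalk_length]

theorem arcWalk_isPath (a b : ZMod n) : (arcWalk hC a b).IsPath := by
  simpa [arcWalk] using forwardWalk_isPath hC a (dC_lt a b)

theorem mem_support_arcWalk {a b w : ZMod n} :
    w ∈ (arcWalk hC a b).support ↔ w ∈ arc a b := by
  simp only [arcWalk, SimpleGraph.Walk.support_copy, forwardWalk_support, List.mem_map,
    List.mem_range, arc, Set.mem_ofPred_eq]
  constructor
  · rintro ⟨j, hj, rfl⟩
    rw [dC_add_natCast (by have := dC_lt a b; omega)]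
    omega
  · exact fun hw => ⟨dC a w, by omega, add_dC a w⟩

end ArcWalk

/-- Given two interlacing chords `uv` and `xy` with `u ≺ x ≺ v ≺ y`, the graph `G`
contains a nontrivial cycle of length at least `n - d_C(u,x) - d_C(v,y) + 2`; in
particular, a nontrivial cycle missing at most `d_C(u,x) + d_C(v,y)` vertices. -/
theorem nontrivial_cycle_of_interlacing_pair
    (n : ℕ) (G : SimpleGraph (ZMod n)) (hn : 3 ≤ n)
    (hC : ∀ i : ZMod n, G.Adj i (i + 1))
    (u v x y : ZMod n)
    (huv : IsChordPair G u v) (hxy : IsChordPair G x y)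
    (h1 : CBtw u x v) (h2 : CBtw v y u) :
    ∃ (w : ZMod n) (W : G.Walk w w), W.IsCycle ∧ {e | e ∈ W.edges} ≠ stdEdges n ∧
      (n : ℝ) - (dC u x : ℝ) - (dC v y : ℝ) + 2 ≤ (W.length : ℝ) ∧
      (n : ℝ) - (W.length : ℝ) ≤ (dC u x : ℝ) + (dC v y : ℝ) := by
  have : NeZero n := ⟨by omega⟩
  obtain ⟨hux, hxv⟩ := h1
  obtain ⟨hvy, hyu⟩ := h2
  have hu_ne_v : u ≠ v := by rintro rfl; simp [dC] at hxv
  have hxv' := dC_add_dC_of_le hxv.le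
  have hyu' := dC_add_dC_of_le hyu.le
  have hsum : dC u x + dC x v + dC v y + dC y u = n := by
    have := dC_add_dC_swap hu_ne_v
    omega
  have hyx : dC y u + dC u x = dC y x := dC_add_dC (by omega)
  let Q : G.Walk y x := (arcWalk hC y u).append (.cons huv.1 (arcWalk hC x v).reverse)
  have hdisj : Disjoint (arc y u) (arc x v) := disjoint_arc (by omega) (by omega)
  have hQ : Q.IsPath := by
    refine (arcWalk_isPath hC y u).append_cons (arcWalk_isPath hC x v).reverse huv.1 ?_
    intro w hw₁ hw₂
    rw [SimpleGraph.Walk.support_reverse, List.mem_reverse] at hw₂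
    exact Set.disjoint_left.1 hdisj ((mem_support_arcWalk hC).1 hw₁)
      ((mem_support_arcWalk hC).1 hw₂)
  have hlen : Q.length = dC y u + dC x v + 1 := by
    simp only [Q, SimpleGraph.Walk.length_append, SimpleGraph.Walk.length_cons,
      SimpleGraph.Walk.length_reverse, arcWalk_length]
    omega
  refine ⟨x, .cons hxy.1 Q, hQ.cons_isCycle_of_one_lt_length (by omega) hxy.1,
    fun h => hxy.2 (h ▸ by simp), ?_⟩
  have hsum' : (dC u x : ℝ) + dC x v + dC v y + dC y u = n := by exact_mod_cast hsum
  simp only [SimpleGraph.Walk.length_cons, hlen]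
  push_cast
  constructor <;> linarith
end

section
/- Let G be a simple graph on n vertices with a designated Hamiltonian cycle C, let m ≥ 1 with m^{1/3}/8 ≥ 6, and let I be a set of 2m independent chords of G such that every subset of I of size at least m/8 contains a chain in P_I of size at least m^{1/3}/8. Then for every K ≥ 1/2, every subset S ⊆ I of size K·m contains K·m/4 pairwise disjoint tight triples (with respect to the parameter m). -/
/-- `S` is a set of independent chords of `G`: every element is a chord, and no two
distinct chords in `S` share an endpoint.  (Chords are recorded as ordered pairs of
endpoints.) -/
def IndepChords {n : ℕ} (G : SimpleGraph (ZMod n)) (S : Finset (ZMod n × ZMod n)) : Prop :=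
  (∀ e ∈ S, IsChordPair G e.1 e.2) ∧
  (∀ e ∈ S, ∀ e' ∈ S, e ≠ e' →
    e.1 ≠ e'.1 ∧ e.1 ≠ e'.2 ∧ e.2 ≠ e'.1 ∧ e.2 ≠ e'.2)

/-- The *interior* of the chord `{a, b}` with respect to the fixed cycle edge
`f = {f0, f0 + 1}`: the domain of the chord containing both endpoints of `f`. -/
def interiorD {n : ℕ} (f0 a b : ZMod n) : Set (ZMod n) :=
  if dC a f0 ≤ dC a b ∧ dC a (f0 + 1) ≤ dC a b then arc a b else arc b a

/-- The *exterior* of the chord `{a, b}` with respect to the fixed cycle edge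
`f = {f0, f0 + 1}`: the domain of the chord other than its interior. -/
def exteriorD {n : ℕ} (f0 a b : ZMod n) : Set (ZMod n) :=
  if dC a f0 ≤ dC a b ∧ dC a (f0 + 1) ≤ dC a b then arc b a else arc a b

/-- The position of `v` in the linear order `L` on the vertices obtained by starting at
the endpoint `f0 + 1` of the fixed cycle edge `f = {f0, f0 + 1}` and following the cycle
to its other endpoint `f0`. -/
def posL {n : ℕ} (f0 v : ZMod n) : ℕ := dC (f0 + 1) v

/-- The strict order of the poset `P_S`:  `e1 < e2` iff the interior of `e1` is
(strictly) contained in the interior of `e2`. -/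
def PRel {n : ℕ} (f0 : ZMod n) (e1 e2 : ZMod n × ZMod n) : Prop :=
  interiorD f0 e1.1 e1.2 ⊂ interiorD f0 e2.1 e2.2

/-- The strict order of the poset `Q_S`:  `e1 < e2` iff both endpoints of `e1` precede
both endpoints of `e2` in the linear order `L`. -/
def QRel {n : ℕ} (f0 : ZMod n) (e1 e2 : ZMod n × ZMod n) : Prop :=
  posL f0 e1.1 < posL f0 e2.1 ∧ posL f0 e1.1 < posL f0 e2.2 ∧
  posL f0 e1.2 < posL f0 e2.1 ∧ posL f0 e1.2 < posL f0 e2.2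

/-- `A` is a chain in the poset `P_S`. -/
def IsChainP {n : ℕ} (f0 : ZMod n) (A : Finset (ZMod n × ZMod n)) : Prop :=
  ∀ e ∈ A, ∀ e' ∈ A, e ≠ e' → PRel f0 e e' ∨ PRel f0 e' e

/-- `A` is a chain in the poset `Q_S`. -/
def IsChainQ {n : ℕ} (f0 : ZMod n) (A : Finset (ZMod n × ZMod n)) : Prop :=
  ∀ e ∈ A, ∀ e' ∈ A, e ≠ e' → QRel f0 e e' ∨ QRel f0 e' e

/-- `A` is an antichain in the poset `P_S`. -/
def IsAntichainP {n : ℕ} (f0 : ZMod n) (A : Finset (ZMod n × ZMod n)) : Prop :=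
  ∀ e ∈ A, ∀ e' ∈ A, e ≠ e' → ¬ PRel f0 e e' ∧ ¬ PRel f0 e' e

/-- `A` is an antichain in the poset `Q_S`. -/
def IsAntichainQ {n : ℕ} (f0 : ZMod n) (A : Finset (ZMod n × ZMod n)) : Prop :=
  ∀ e ∈ A, ∀ e' ∈ A, e ≠ e' → ¬ QRel f0 e e' ∧ ¬ QRel f0 e' e

/-- Six vertices appear in the cyclic order `x1 ≺ x2 ≺ x3 ≺ x4 ≺ x5 ≺ x6` around the
designated Hamiltonian cycle. -/
def CyclicOrder6 {n : ℕ} (x1 x2 x3 x4 x5 x6 : ZMod n) : Prop :=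
  0 < dC x1 x2 ∧ dC x1 x2 < dC x1 x3 ∧ dC x1 x3 < dC x1 x4 ∧
    dC x1 x4 < dC x1 x5 ∧ dC x1 x5 < dC x1 x6

/-- A *tight triple* (with respect to the parameter `m`): three independent chords
`{u1, v1}`, `{u2, v2}`, `{u3, v3}` with `u1 ≺ u2 ≺ u3 ≺ v3 ≺ v2 ≺ v1` around the cycle
and `d_C(u1, u3) + d_C(v3, v1) ≤ 24 n / m^{1/3}`; its middle chord is `{u2, v2}`. -/
def TightTriple {n : ℕ} (G : SimpleGraph (ZMod n)) (m : ℕ)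
    (u1 v1 u2 v2 u3 v3 : ZMod n) : Prop :=
  IsChordPair G u1 v1 ∧ IsChordPair G u2 v2 ∧ IsChordPair G u3 v3 ∧
  CyclicOrder6 u1 u2 u3 v3 v2 v1 ∧
  ((dC u1 u3 + dC v3 v1 : ℕ) : ℝ) ≤ 24 * (n : ℝ) / (m : ℝ) ^ ((1 : ℝ) / 3)

/-- The three chords `e1`, `e2`, `e3` (recorded as ordered pairs of endpoints) form a
tight triple `{e1 < e2 < e3}` with respect to the parameter `m`. -/
def TightTripleOf {n : ℕ} (G : SimpleGraph (ZMod n)) (m : ℕ)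
    (e1 e2 e3 : ZMod n × ZMod n) : Prop :=
  ∃ u1 v1 u2 v2 u3 v3 : ZMod n,
    s(u1, v1) = s(e1.1, e1.2) ∧ s(u2, v2) = s(e2.1, e2.2) ∧
      s(u3, v3) = s(e3.1, e3.2) ∧ TightTriple G m u1 v1 u2 v2 u3 v3

section AuxClaim34
set_option linter.unusedSectionVars false
set_option linter.unusedVariables false
set_option maxHeartbeats 1000000
variable {n : ℕ} [NeZero n]

lemma val_sub_eq (x y : ZMod n) :
    (x - y).val = if y.val ≤ x.val then x.val - y.val else n + x.val - y.val := by
  have hx := x.val_lt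
  have hy := y.val_lt
  split_ifs with h
  · have h1 : x - y = ((x.val - y.val : ℕ) : ZMod n) := by
      rw [Nat.cast_sub h, ZMod.natCast_val, ZMod.natCast_val, ZMod.cast_id, ZMod.cast_id]
    rw [h1, ZMod.val_natCast, Nat.mod_eq_of_lt (by omega)]
  · have hy2 : y.val ≤ n + x.val := by omega
    have h1 : x - y = ((n + x.val - y.val : ℕ) : ZMod n) := by
      rw [Nat.cast_sub hy2, Nat.cast_add, ZMod.natCast_self, ZMod.natCast_val,
        ZMod.natCast_val, ZMod.cast_id, ZMod.cast_id, zero_add]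
    rw [h1, ZMod.val_natCast, Nat.mod_eq_of_lt (by omega)]

lemma dC_eq (f0 a v : ZMod n) :
    dC a v = if posL f0 a ≤ posL f0 v then posL f0 v - posL f0 a
      else n + posL f0 v - posL f0 a := by
  have h : dC a v = ((v - (f0 + 1)) - (a - (f0 + 1))).val := by
    unfold dC; ring_nf
  rw [h, val_sub_eq]; rfl

lemma posL_lt (f0 v : ZMod n) : posL f0 v < n := ZMod.val_lt _

lemma posL_inj (f0 : ZMod n) : Function.Injective (posL f0) := by
  intro x y h
  have : (x - (f0+1)) = (y - (f0+1)) := ZMod.val_injective _ h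
  linear_combination this

lemma posL_self (f0 : ZMod n) : posL f0 (f0 + 1) = 0 := by
  simp [posL, dC]

lemma posL_f0 (f0 : ZMod n) (hn : 2 ≤ n) : posL f0 f0 = n - 1 := by
  have h : f0 - (f0 + 1) = (((n - 1 : ℕ)) : ZMod n) := by
    rw [Nat.cast_sub (by omega), ZMod.natCast_self]
    push_cast
    ring
  rw [posL, dC, h, ZMod.val_natCast, Nat.mod_eq_of_lt (by omega)]

lemma posL_succ (f0 w : ZMod n) (hn : 2 ≤ n) : posL f0 (w + 1) = (posL f0 w + 1) % n := by
  haveI : Fact (1 < n) := ⟨by omega⟩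
  have h : (w + 1) - (f0 + 1) = (w - (f0+1)) + 1 := by ring
  rw [posL, dC, h, ZMod.val_add, ZMod.val_one]
  rfl

lemma posL_surj (f0 : ZMod n) (k : ℕ) (hk : k < n) : ∃ v, posL f0 v = k := by
  refine ⟨f0 + 1 + k, ?_⟩
  have h : (f0 + 1 + (k:ZMod n)) - (f0 + 1) = (k : ZMod n) := by ring
  rw [posL, dC, h, ZMod.val_natCast, Nat.mod_eq_of_lt hk]


lemma chordPos {G : SimpleGraph (ZMod n)} {a b : ZMod n} (hn : 3 ≤ n) (f0 : ZMod n)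
    (hch : IsChordPair G a b) :
    posL f0 a ≠ posL f0 b ∧
    min (posL f0 a) (posL f0 b) + 2 ≤ max (posL f0 a) (posL f0 b) ∧
    ¬(min (posL f0 a) (posL f0 b) = 0 ∧ max (posL f0 a) (posL f0 b) = n - 1) := by
  have hab : a ≠ b := hch.1.ne
  have hpa := posL_lt f0 a
  have hpb := posL_lt f0 b
  have hpab : posL f0 a ≠ posL f0 b := fun h => hab (posL_inj f0 h)
  have hnot1 : posL f0 b ≠ posL f0 a + 1 := by
    intro h
    refine hch.2 ⟨a, ?_⟩
    have : posL f0 (a + 1) = posL f0 b := by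
      rw [posL_succ f0 a (by omega), h, Nat.mod_eq_of_lt (by omega)]
    rw [posL_inj f0 this]
  have hnot2 : posL f0 a ≠ posL f0 b + 1 := by
    intro h
    refine hch.2 ⟨b, ?_⟩
    have : posL f0 (b + 1) = posL f0 a := by
      rw [posL_succ f0 b (by omega), h, Nat.mod_eq_of_lt (by omega)]
    rw [← posL_inj f0 this, Sym2.eq_swap]
  have hnot3 : ¬(posL f0 a = 0 ∧ posL f0 b = n - 1) := by
    rintro ⟨h1, h2⟩
    have ha : a = f0 + 1 := posL_inj f0 (by rw [h1, posL_self])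
    have hb : b = f0 := posL_inj f0 (by rw [h2, posL_f0 f0 (by omega)])
    exact hch.2 ⟨f0, by rw [ha, hb, Sym2.eq_swap]⟩
  have hnot4 : ¬(posL f0 b = 0 ∧ posL f0 a = n - 1) := by
    rintro ⟨h1, h2⟩
    have hb : b = f0 + 1 := posL_inj f0 (by rw [h1, posL_self])
    have ha : a = f0 := posL_inj f0 (by rw [h2, posL_f0 f0 (by omega)])
    exact hch.2 ⟨f0, by rw [ha, hb]⟩
  omega

lemma mem_interiorD (hn : 3 ≤ n) {f0 a b : ZMod n}
    (hpab : posL f0 a ≠ posL f0 b)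
    (h2 : min (posL f0 a) (posL f0 b) + 2 ≤ max (posL f0 a) (posL f0 b))
    (h3 : ¬(min (posL f0 a) (posL f0 b) = 0 ∧ max (posL f0 a) (posL f0 b) = n - 1))
    (v : ZMod n) :
    v ∈ interiorD f0 a b ↔
      posL f0 v ≤ min (posL f0 a) (posL f0 b) ∨ max (posL f0 a) (posL f0 b) ≤ posL f0 v := by
  have hpa := posL_lt f0 a
  have hpb := posL_lt f0 b
  have hpv := posL_lt f0 v
  have hf0 : posL f0 f0 = n - 1 := posL_f0 f0 (by omega)
  have hf1 : posL f0 (f0 + 1) = 0 := posL_self f0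
  simp only [interiorD]
  split_ifs with h
  · simp only [arc, Set.mem_setOf_eq]
    rw [dC_eq f0 a f0, dC_eq f0 a (f0+1), dC_eq f0 a b, hf0, hf1] at h
    rw [dC_eq f0 a v, dC_eq f0 a b]
    split_ifs at h ⊢ <;> omega
  · simp only [arc, Set.mem_setOf_eq]
    rw [dC_eq f0 a f0, dC_eq f0 a (f0+1), dC_eq f0 a b, hf0, hf1] at h
    rw [dC_eq f0 b v, dC_eq f0 b a]
    push_neg at h
    split_ifs at h ⊢ <;> omega


def loP {n : ℕ} (f0 : ZMod n) (e : ZMod n × ZMod n) : ℕ := min (posL f0 e.1) (posL f0 e.2)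
def hiP {n : ℕ} (f0 : ZMod n) (e : ZMod n × ZMod n) : ℕ := max (posL f0 e.1) (posL f0 e.2)

lemma prel_le {G : SimpleGraph (ZMod n)} (hn : 3 ≤ n) {f0 : ZMod n}
    {e1 e2 : ZMod n × ZMod n}
    (hc1 : IsChordPair G e1.1 e1.2) (hc2 : IsChordPair G e2.1 e2.2)
    (hP : PRel f0 e1 e2) :
    loP f0 e1 ≤ loP f0 e2 ∧ hiP f0 e2 ≤ hiP f0 e1 := by
  obtain ⟨hpab1, h21, h31⟩ := chordPos hn f0 hc1
  obtain ⟨hpab2, h22, h32⟩ := chordPos hn f0 hc2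
  have hsub := hP.subset
  have hm2 : max (posL f0 e2.1) (posL f0 e2.2) < n := by
    have := posL_lt f0 e2.1; have := posL_lt f0 e2.2; omega
  obtain ⟨w1, hw1⟩ := posL_surj f0 (min (posL f0 e2.1) (posL f0 e2.2) + 1) (by omega)
  obtain ⟨w2, hw2⟩ := posL_surj f0 (max (posL f0 e2.1) (posL f0 e2.2) - 1) (by omega)
  have hn1 : w1 ∉ interiorD f0 e1.1 e1.2 := by
    intro h
    have := (mem_interiorD hn hpab2 h22 h32 w1).mp (hsub h)
    omega
  have hn2 : w2 ∉ interiorD f0 e1.1 e1.2 := by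
    intro h
    have := (mem_interiorD hn hpab2 h22 h32 w2).mp (hsub h)
    omega
  rw [mem_interiorD hn hpab1 h21 h31 w1] at hn1
  rw [mem_interiorD hn hpab1 h21 h31 w2] at hn2
  push_neg at hn1 hn2
  simp only [loP, hiP]
  omega

lemma chain_nested {G : SimpleGraph (ZMod n)} (hn : 3 ≤ n) {f0 : ZMod n}
    {I A : Finset (ZMod n × ZMod n)} (hI : IndepChords G I) (hAI : A ⊆ I)
    (hch : IsChainP f0 A) {e e' : ZMod n × ZMod n}
    (he : e ∈ A) (he' : e' ∈ A) (hne : e ≠ e') (hlt : loP f0 e < loP f0 e') :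
    hiP f0 e' < hiP f0 e := by
  have hc1 := hI.1 e (hAI he)
  have hc2 := hI.1 e' (hAI he')
  obtain ⟨d1, d2, d3, d4⟩ := hI.2 e (hAI he) e' (hAI he') hne
  have p1 : posL f0 e.1 ≠ posL f0 e'.1 := fun h => d1 (posL_inj f0 h)
  have p2 : posL f0 e.1 ≠ posL f0 e'.2 := fun h => d2 (posL_inj f0 h)
  have p3 : posL f0 e.2 ≠ posL f0 e'.1 := fun h => d3 (posL_inj f0 h)
  have p4 : posL f0 e.2 ≠ posL f0 e'.2 := fun h => d4 (posL_inj f0 h)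
  rcases hch e he e' he' hne with hP | hP
  · have := prel_le hn hc1 hc2 hP
    simp only [loP, hiP] at *
    omega
  · have := prel_le hn hc2 hc1 hP
    simp only [loP, hiP] at *
    omega


lemma orient {G : SimpleGraph (ZMod n)} (f0 : ZMod n) {e : ZMod n × ZMod n}
    (hc : IsChordPair G e.1 e.2) :
    ∃ u v, s(u, v) = s(e.1, e.2) ∧ IsChordPair G u v ∧
      posL f0 u = loP f0 e ∧ posL f0 v = hiP f0 e := by
  rcases le_total (posL f0 e.1) (posL f0 e.2) with h | h
  · exact ⟨e.1, e.2, rfl, hc, by simp [loP, min_eq_left h], by simp [hiP, max_eq_right h]⟩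
  · refine ⟨e.2, e.1, Sym2.eq_swap, ⟨hc.1.symm, by rw [Sym2.eq_swap]; exact hc.2⟩,
      by simp [loP, min_eq_right h], by simp [hiP, max_eq_left h]⟩

lemma exists_tight_triple {G : SimpleGraph (ZMod n)} (hn : 3 ≤ n)
    {m : ℕ} (hm6 : 6 ≤ (m : ℝ) ^ ((1:ℝ)/3) / 8) (f0 : ZMod n)
    {I A : Finset (ZMod n × ZMod n)} (hI : IndepChords G I) (hAI : A ⊆ I)
    (hch : IsChainP f0 A) (hA : (m : ℝ) ^ ((1:ℝ)/3) / 8 ≤ (A.card : ℝ)) :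
    ∃ e1 e2 e3, e1 ∈ A ∧ e2 ∈ A ∧ e3 ∈ A ∧ e1 ≠ e2 ∧ e1 ≠ e3 ∧ e2 ≠ e3 ∧
      TightTripleOf G m e1 e2 e3 := by
  set c : ℝ := (m : ℝ) ^ ((1:ℝ)/3) with hcdef
  have hc48 : 48 ≤ c := by linarith
  have hl6 : 6 ≤ A.card := by
    have h6 : (6 : ℝ) ≤ (A.card : ℝ) := le_trans (by linarith) hA
    exact_mod_cast h6
  set ℓ := A.card with hℓdef
  -- injectivity of loP on A
  have hinj : Set.InjOn (loP f0) A := by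
    intro e he e' he' h
    by_contra hne
    obtain ⟨d1, d2, d3, d4⟩ := hI.2 e (hAI he) e' (hAI he') hne
    obtain ⟨q1, q2, q3⟩ := chordPos (G := G) hn f0 (hI.1 e (hAI he))
    obtain ⟨q1', q2', q3'⟩ := chordPos (G := G) hn f0 (hI.1 e' (hAI he'))
    have p1 : posL f0 e.1 ≠ posL f0 e'.1 := fun hh => d1 (posL_inj f0 hh)
    have p2 : posL f0 e.1 ≠ posL f0 e'.2 := fun hh => d2 (posL_inj f0 hh)
    have p3 : posL f0 e.2 ≠ posL f0 e'.1 := fun hh => d3 (posL_inj f0 hh)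
    have p4 : posL f0 e.2 ≠ posL f0 e'.2 := fun hh => d4 (posL_inj f0 hh)
    simp only [loP] at h
    omega
  have hJ : (A.image (loP f0)).card = ℓ := Finset.card_image_of_injOn hinj
  have hex : ∀ i : Fin ℓ, ∃ e, e ∈ A ∧ loP f0 e = (A.image (loP f0)).orderEmbOfFin hJ i := by
    intro i
    have hmem := (A.image (loP f0)).orderEmbOfFin_mem hJ i
    rw [Finset.mem_image] at hmem
    obtain ⟨e, he, hee⟩ := hmem
    exact ⟨e, he, hee⟩
  choose cmap hmem hlo using hex
  have hmono : ∀ i j : Fin ℓ, i < j → loP f0 (cmap i) < loP f0 (cmap j) := by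
    intro i j hij
    rw [hlo i, hlo j]
    exact ((A.image (loP f0)).orderEmbOfFin hJ).strictMono hij
  have hnest : ∀ i j : Fin ℓ, i < j →
      loP f0 (cmap i) < loP f0 (cmap j) ∧ hiP f0 (cmap j) < hiP f0 (cmap i) := by
    intro i j hij
    have hlt := hmono i j hij
    have hne : cmap i ≠ cmap j := fun h => absurd (congrArg (loP f0) h) hlt.ne
    exact ⟨hlt, chain_nested hn hI hAI hch (hmem i) (hmem j) hne hlt⟩
  have hbd : ∀ i : Fin ℓ, loP f0 (cmap i) + 2 ≤ hiP f0 (cmap i) ∧ hiP f0 (cmap i) < n := by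
    intro i
    obtain ⟨q1, q2, q3⟩ := chordPos (G := G) hn f0 (hI.1 _ (hAI (hmem i)))
    have := posL_lt f0 (cmap i).1
    have := posL_lt f0 (cmap i).2
    simp only [loP, hiP] at *
    omega
  set k := (ℓ - 1) / 2 with hkdef
  have hk2 : 2 ≤ k := by omega
  have h2k : 2 * k ≤ ℓ - 1 := by omega
  set cc : ℕ → ZMod n × ZMod n := fun i => cmap ⟨min i (ℓ - 1), by omega⟩ with hccdef
  set L : ℕ → ℕ := fun i => loP f0 (cc i) with hLdef
  set H : ℕ → ℕ := fun i => hiP f0 (cc i) with hHdef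
  have hccm : ∀ i ∈ Finset.range ℓ, cc i ∈ A := fun i _ => hmem _
  have hccnest : ∀ i j : ℕ, i < j → j ≤ ℓ - 1 → L i < L j ∧ H j < H i := by
    intro i j hij hj
    apply hnest
    simp only [Fin.lt_def]
    omega
  have hccbd : ∀ i : ℕ, L i + 2 ≤ H i ∧ H i < n := fun i => hbd _
  set F : ℕ → ℤ := fun j => (L (2 * j) : ℤ) - (H (2 * j) : ℤ) with hFdef
  have htel : ∑ j ∈ Finset.range k, (F (j + 1) - F j) = F k - F 0 :=
    Finset.sum_range_sub F k
  have hFbound : F k - F 0 ≤ (n : ℤ) := by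
    have h1 := hccbd (2 * k)
    have h2 := hccbd 0
    simp only [hFdef, Nat.mul_zero]
    push_cast
    omega
  have hpig : ∃ j, j < k ∧ (k : ℤ) * (F (j + 1) - F j) ≤ (n : ℤ) := by
    by_contra hcon
    push_neg at hcon
    have hsum : ∑ j ∈ Finset.range k, (n : ℤ) < ∑ j ∈ Finset.range k, (k : ℤ) * (F (j + 1) - F j) := by
      apply Finset.sum_lt_sum_of_nonempty
      · exact ⟨0, Finset.mem_range.mpr (by omega)⟩
      · intro j hj
        exact hcon j (Finset.mem_range.mp hj)
    rw [← Finset.mul_sum, htel, Finset.sum_const, Finset.card_range, nsmul_eq_mul] at hsum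
    have hkpos : (0 : ℤ) < (k : ℤ) := by exact_mod_cast (by omega : 0 < k)
    have := lt_of_mul_lt_mul_left hsum (le_of_lt hkpos)
    omega
  obtain ⟨j, hjk, hkd⟩ := hpig
  have hi2le : 2 * j + 2 ≤ ℓ - 1 := by omega
  -- the three chords
  set e1 := cc (2 * j) with he1def
  set e2 := cc (2 * j + 1) with he2def
  set e3 := cc (2 * j + 2) with he3def
  have h01 := hccnest (2 * j) (2 * j + 1) (by omega) (by omega)
  have h12 := hccnest (2 * j + 1) (2 * j + 2) (by omega) (by omega)
  have h02 := hccnest (2 * j) (2 * j + 2) (by omega) (by omega)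
  have hb1 := hccbd (2 * j)
  have hb2 := hccbd (2 * j + 1)
  have hb3 := hccbd (2 * j + 2)
  -- the nat distance
  set d : ℕ := (L (2 * j + 2) - L (2 * j)) + (H (2 * j) - H (2 * j + 2)) with hddef
  have hdF : (d : ℤ) = F (j + 1) - F j := by
    have h2j : 2 * (j + 1) = 2 * j + 2 := by ring
    simp only [hFdef, h2j]
    push_cast [hddef]
    omega
  have hkdn : (k : ℤ) * (d : ℤ) ≤ (n : ℤ) := by rw [hdF]; exact hkd
  -- real estimate
  have hdreal : (d : ℝ) ≤ 24 * (n : ℝ) / c := by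
    have hkR : c / 24 ≤ (k : ℝ) := by
      have hcast : ((ℓ : ℝ) - 2) / 2 ≤ (k : ℝ) := by
        have : (ℓ - 2 : ℕ) ≤ 2 * k := by omega
        have := (Nat.cast_le (α := ℝ)).mpr this
        push_cast [Nat.cast_sub (by omega : 2 ≤ ℓ)] at this
        linarith
      have hl8 : c / 8 ≤ (ℓ : ℝ) := hA
      have hl6R : (6 : ℝ) ≤ (ℓ : ℝ) := by exact_mod_cast hl6
      -- ℓ - 2 ≥ (2/3) ℓ ≥ (2/3)(c/8) = c/12
      nlinarith
    have hkdR : (k : ℝ) * (d : ℝ) ≤ (n : ℝ) := by exact_mod_cast hkdn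
    have hcpos : (0 : ℝ) < c := by linarith
    rw [le_div_iff₀ (by linarith : (0:ℝ) < c)]
    have hdnn : (0 : ℝ) ≤ (d : ℝ) := Nat.cast_nonneg d
    nlinarith [mul_le_mul_of_nonneg_left hkR hdnn]
  -- orient the chords
  obtain ⟨u1, v1, hs1, hcp1, hu1, hv1⟩ := orient f0 (hI.1 e1 (hAI (hmem _)))
  obtain ⟨u2, v2, hs2, hcp2, hu2, hv2⟩ := orient f0 (hI.1 e2 (hAI (hmem _)))
  obtain ⟨u3, v3, hs3, hcp3, hu3, hv3⟩ := orient f0 (hI.1 e3 (hAI (hmem _)))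
  have hp1 : posL f0 u1 = L (2 * j) := hu1
  have hp2 : posL f0 u2 = L (2 * j + 1) := hu2
  have hp3 : posL f0 u3 = L (2 * j + 2) := hu3
  have hq1 : posL f0 v1 = H (2 * j) := hv1
  have hq2 : posL f0 v2 = H (2 * j + 1) := hv2
  have hq3 : posL f0 v3 = H (2 * j + 2) := hv3
  have key : ∀ x y : ZMod n, posL f0 x ≤ posL f0 y → dC x y = posL f0 y - posL f0 x := by
    intro x y h
    rw [dC_eq f0 x y, if_pos h]
  have hcyc : CyclicOrder6 u1 u2 u3 v3 v2 v1 := by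
    unfold CyclicOrder6
    rw [key u1 u2 (by rw [hp1, hp2]; omega), key u1 u3 (by rw [hp1, hp3]; omega),
      key u1 v3 (by rw [hp1, hq3]; omega), key u1 v2 (by rw [hp1, hq2]; omega),
      key u1 v1 (by rw [hp1, hq1]; omega), hp1, hp2, hp3, hq1, hq2, hq3]
    omega
  have hsum : dC u1 u3 + dC v3 v1 = d := by
    rw [key u1 u3 (by rw [hp1, hp3]; omega), key v3 v1 (by rw [hq3, hq1]; omega),
      hp1, hp3, hq1, hq3]
  refine ⟨e1, e2, e3, hmem _, hmem _, hmem _, ?_, ?_, ?_,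
    u1, v1, u2, v2, u3, v3, hs1, hs2, hs3, hcp1, hcp2, hcp3, hcyc, ?_⟩
  · exact fun h => absurd (congrArg (loP f0) h) (ne_of_lt h01.1)
  · exact fun h => absurd (congrArg (loP f0) h) (ne_of_lt h02.1)
  · exact fun h => absurd (congrArg (loP f0) h) (ne_of_lt h12.1)
  · rw [hsum]
    exact hdreal

lemma greedy {G : SimpleGraph (ZMod n)} (hn : 3 ≤ n) {m : ℕ}
    (hm6 : 6 ≤ (m : ℝ) ^ ((1:ℝ)/3) / 8) (f0 : ZMod n)
    {I : Finset (ZMod n × ZMod n)} (hI : IndepChords G I)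
    (hchain : ∀ S' ⊆ I, (m : ℝ) / 8 ≤ (S'.card : ℝ) →
      ∃ A ⊆ S', IsChainP f0 A ∧ (m : ℝ) ^ ((1 : ℝ) / 3) / 8 ≤ (A.card : ℝ))
    (S : Finset (ZMod n × ZMod n)) :
    S ⊆ I → ∃ (t : ℕ)
      (T : Fin t → (ZMod n × ZMod n) × (ZMod n × ZMod n) × (ZMod n × ZMod n)),
        ((S.card : ℝ) - (m : ℝ) / 8 ≤ 3 * t) ∧
        (∀ j, (T j).1 ∈ S ∧ (T j).2.1 ∈ S ∧ (T j).2.2 ∈ S) ∧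
        (∀ j, TightTripleOf G m (T j).1 (T j).2.1 (T j).2.2) ∧
        (∀ j k, j ≠ k →
          ∀ a ∈ ({(T j).1, (T j).2.1, (T j).2.2} : Set (ZMod n × ZMod n)),
            a ∉ ({(T k).1, (T k).2.1, (T k).2.2} : Set (ZMod n × ZMod n))) := by
  induction S using Finset.strongInduction with
  | _ S ih =>
  intro hSI
  by_cases hsmall : (S.card : ℝ) < (m : ℝ) / 8
  · exact ⟨0, Fin.elim0, by simp; linarith, fun j => j.elim0, fun j => j.elim0,
      fun j => j.elim0⟩
  push_neg at hsmall
  obtain ⟨A, hAS, hchA, hAcard⟩ := hchain S hSI hsmall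
  obtain ⟨e1, e2, e3, he1, he2, he3, h12, h13, h23, htt⟩ :=
    exists_tight_triple hn hm6 f0 hI (hAS.trans hSI) hchA hAcard
  have he1S : e1 ∈ S := hAS he1
  have he2S : e2 ∈ S := hAS he2
  have he3S : e3 ∈ S := hAS he3
  set E : Finset (ZMod n × ZMod n) := {e1, e2, e3} with hEdef
  have hES : E ⊆ S := by
    intro x hx
    simp only [hEdef, Finset.mem_insert, Finset.mem_singleton] at hx
    rcases hx with h | h | h <;> subst h <;> assumption
  have hEcard : E.card = 3 := by
    rw [hEdef]
    rw [Finset.card_insert_of_notMem (by simp [h12, h13]),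
      Finset.card_insert_of_notMem (by simp [h23]), Finset.card_singleton]
  set S' := S \ E with hS'def
  have hS'ss : S' ⊂ S := by
    refine Finset.ssubset_iff_of_subset (Finset.sdiff_subset) |>.mpr ⟨e1, he1S, ?_⟩
    simp [hS'def, hEdef]
  have hS'card : S'.card = S.card - 3 := by
    rw [hS'def, Finset.card_sdiff_of_subset hES, hEcard]
  have hcard3 : 3 ≤ S.card := hEcard ▸ Finset.card_le_card hES
  obtain ⟨t', T', hcard', hmemS', htight', hdisj'⟩ := ih S' hS'ss (Finset.sdiff_subset.trans hSI)
  have hnotE : ∀ j, (T' j).1 ∉ E ∧ (T' j).2.1 ∉ E ∧ (T' j).2.2 ∉ E := by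
    intro j
    obtain ⟨a, b, c⟩ := hmemS' j
    rw [hS'def, Finset.mem_sdiff] at a b c
    exact ⟨a.2, b.2, c.2⟩
  refine ⟨t' + 1, Fin.cons (e1, e2, e3) T', ?_, ?_, ?_, ?_⟩
  · have : ((S'.card : ℝ)) = (S.card : ℝ) - 3 := by
      rw [hS'card, Nat.cast_sub hcard3]
      norm_num
    rw [this] at hcard'
    push_cast
    linarith
  · intro j
    refine Fin.cases ?_ ?_ j
    · exact ⟨he1S, he2S, he3S⟩
    · intro i
      simp only [Fin.cons_succ]
      obtain ⟨a, b, c⟩ := hmemS' i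
      rw [hS'def, Finset.mem_sdiff] at a b c
      exact ⟨a.1, b.1, c.1⟩
  · intro j
    refine Fin.cases ?_ ?_ j
    · exact htt
    · intro i
      simpa only [Fin.cons_succ] using htight' i
  · have hmemE : ∀ x, x ∈ ({e1, e2, e3} : Set (ZMod n × ZMod n)) → x ∈ E := by
      intro x hx
      simp only [Set.mem_insert_iff, Set.mem_singleton_iff] at hx
      simp only [hEdef, Finset.mem_insert, Finset.mem_singleton]
      tauto
    intro j k hjk
    induction j using Fin.cases with
    | zero =>
      induction k using Fin.cases with
      | zero => exact absurd rfl hjk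
      | succ k' =>
        intro a ha hb
        simp only [Fin.cons_succ, Fin.cons_zero] at ha hb ⊢
        obtain ⟨hE1, hE2, hE3⟩ := hnotE k'
        simp only [Set.mem_insert_iff, Set.mem_singleton_iff] at hb
        rcases hb with h | h | h <;> subst h
        · exact hE1 (hmemE _ ha)
        · exact hE2 (hmemE _ ha)
        · exact hE3 (hmemE _ ha)
    | succ j' =>
      induction k using Fin.cases with
      | zero =>
        intro a ha hb
        simp only [Fin.cons_succ, Fin.cons_zero] at ha hb ⊢
        obtain ⟨hE1, hE2, hE3⟩ := hnotE j'
        simp only [Set.mem_insert_iff, Set.mem_singleton_iff] at ha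
        rcases ha with h | h | h <;> subst h
        · exact hE1 (hmemE _ hb)
        · exact hE2 (hmemE _ hb)
        · exact hE3 (hmemE _ hb)
      | succ k' =>
        intro a ha hb
        simp only [Fin.cons_succ] at ha hb
        exact hdisj' j' k' (fun h => hjk (by rw [h])) a ha hb

end AuxClaim34

/-- **Claim 3.4.**  Let `I` be a set of `2m` independent chords (`m ≥ 1`,
`m^{1/3}/8 ≥ 6`) such that every subset of `I` of size at least `m/8` contains a chain
in `P_I` of size at least `m^{1/3}/8`.  Then for every `K ≥ 1/2`, every subset `S ⊆ I`
of size `K·m` contains `K·m/4` pairwise disjoint tight triples (with respect to the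
parameter `m`). -/
theorem many_disjoint_tight_triples
    (n m : ℕ) (G : SimpleGraph (ZMod n)) (hn : 3 ≤ n)
    (hC : ∀ i : ZMod n, G.Adj i (i + 1)) (hm : 1 ≤ m)
    (hm6 : 6 ≤ (m : ℝ) ^ ((1 : ℝ) / 3) / 8)
    (f0 : ZMod n) (I : Finset (ZMod n × ZMod n)) (hI : IndepChords G I)
    (hIcard : I.card = 2 * m)
    (hchain : ∀ S' ⊆ I, (m : ℝ) / 8 ≤ (S'.card : ℝ) →
      ∃ A ⊆ S', IsChainP f0 A ∧ (m : ℝ) ^ ((1 : ℝ) / 3) / 8 ≤ (A.card : ℝ))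
    (K : ℝ) (hK : 1 / 2 ≤ K)
    (S : Finset (ZMod n × ZMod n)) (hS : S ⊆ I)
    (hScard : (S.card : ℝ) = K * (m : ℝ)) :
    ∃ t : ℕ, K * (m : ℝ) / 4 ≤ (t : ℝ) ∧
      ∃ T : Fin t → (ZMod n × ZMod n) × (ZMod n × ZMod n) × (ZMod n × ZMod n),
        (∀ j, (T j).1 ∈ S ∧ (T j).2.1 ∈ S ∧ (T j).2.2 ∈ S) ∧
        (∀ j, TightTripleOf G m (T j).1 (T j).2.1 (T j).2.2) ∧
        (∀ j k, j ≠ k →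
          ∀ a ∈ ({(T j).1, (T j).2.1, (T j).2.2} : Set (ZMod n × ZMod n)),
            a ∉ ({(T k).1, (T k).2.1, (T k).2.2} : Set (ZMod n × ZMod n))) := by
  haveI : NeZero n := ⟨by omega⟩
  obtain ⟨t, T, hcard, hmem, htight, hdisj⟩ := greedy hn hm6 f0 hI hchain S hS
  refine ⟨t, ?_, T, hmem, htight, hdisj⟩
  rw [hScard] at hcard
  have hm0 : (0 : ℝ) ≤ (m : ℝ) := Nat.cast_nonneg m
  nlinarith [mul_nonneg (by linarith : (0:ℝ) ≤ 2 * K - 1) hm0]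
end
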